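/- arXiv:2003.03450 — 4 statements merged into one kernel-verified Lean document; each statement's English description precedes it below -/
import Mathlib

section
/- Let F be a field and γ ∈ GL_n(F) regular elliptic (irreducible characteristic polynomial). Let P₀ = {g ∈ GL_n(F) : last row of g equals (0,…,0,1)} be the stabilizer of the row vector e_n. Then every g ∈ GL_n(F) can be written uniquely as g = p·x with p ∈ P₀ and x ∈ F[γ]^× (an invertible element of the field F[γ]); in particular GL_n(F) = P₀ · F[γ]^× and P₀ ∩ F[γ]^× = {I_n}. -/
/-!
The field `F[γ]` has dimension `n` over `F`, and the map `x ↦ eₙ x` (the last row of `x`) from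
`F[γ]` to row vectors is `F`-linear and injective, because every nonzero `x ∈ F[γ]` is invertible.
Hence it is bijective: `F[γ]ˣ` acts simply transitively on the nonzero row vectors. Since `P₀` is the
stabilizer of `eₙ`, `g = p x` forces `x` to be the unique element of `F[γ]` with `eₙ x = eₙ g`,
and that `x` works: `p = g x⁻¹` fixes `eₙ`.
-/

open Polynomial Module

theorem exists_mul_eq_one_of_mem_adjoin_singleton {F A : Type*} [Field F] [Ring A] [Algebra F A]
    {a : A} (ha : Irreducible (minpoly F a)) {x : A} (hx : x ∈ Algebra.adjoin F {a})
    (hx0 : x ≠ 0) : ∃ y ∈ Algebra.adjoin F {a}, x * y = 1 := by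
  rw [Algebra.adjoin_singleton_eq_range_aeval] at hx
  obtain ⟨q, rfl⟩ := (aeval a).mem_range.mp hx
  have hndvd : ¬ minpoly F a ∣ q := fun ⟨c, hc⟩ => hx0 (by simp [hc])
  -- Bézout with the minimal polynomial `μ`: `u q + v μ = 1`, and `μ(a) = 0`.
  obtain ⟨u, v, huv⟩ := (ha.coprime_iff_not_dvd.mpr hndvd).symm
  refine ⟨aeval a u, aeval_mem_adjoin_singleton F a, ?_⟩
  rw [← map_mul, mul_comm]
  simpa using congrArg (aeval a) huv

namespace Matrix

variable {F : Type*} [Field F] {n : Type*} [DecidableEq n]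

theorem row_one (i : n) : (1 : Matrix n n F) i = Pi.single i 1 :=
  funext fun _ => one_eq_pi_single

variable [Fintype n]

theorem row_ne_zero_of_mul_eq_one {A B : Matrix n n F} (h : A * B = 1) (i : n) : A i ≠ 0 := by
  intro hA
  simpa [mul_apply, congrFun hA] using congrFun (congrFun h i) i

theorem row_mul_eq_of_row_eq_single {p : Matrix n n F} {i : n} (hp : p i = Pi.single i 1)
    (x : Matrix n n F) : (p * x) i = x i := by
  rw [mul_apply_eq_vecMul, hp, single_one_vecMul, row]

theorem minpoly_eq_charpoly_of_irreducible {γ : Matrix n n F} (hγ : Irreducible γ.charpoly) :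
    minpoly F γ = γ.charpoly := by
  have : Nonempty n := Fintype.card_pos_iff.mp (γ.charpoly_natDegree_eq_dim ▸ hγ.natDegree_pos)
  exact (minpoly.eq_of_irreducible_of_monic hγ γ.aeval_self_charpoly γ.charpoly_monic).symm

section Irreducible

variable {γ : Matrix n n F}

theorem eq_zero_of_mem_adjoin_of_row_eq_zero (hγ : Irreducible γ.charpoly) {x : Matrix n n F}
    (hx : x ∈ Algebra.adjoin F {γ}) {i : n} (hrow : x i = 0) : x = 0 := by
  by_contra hx0
  obtain ⟨y, -, hxy⟩ := exists_mul_eq_one_of_mem_adjoin_singleton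
    ((minpoly_eq_charpoly_of_irreducible hγ).symm ▸ hγ) hx hx0
  exact row_ne_zero_of_mul_eq_one hxy i hrow

theorem eq_of_mem_adjoin_of_row_eq (hγ : Irreducible γ.charpoly) {x x' : Matrix n n F}
    (hx : x ∈ Algebra.adjoin F {γ}) (hx' : x' ∈ Algebra.adjoin F {γ}) {i : n}
    (hrow : x i = x' i) : x = x' :=
  sub_eq_zero.mp <| eq_zero_of_mem_adjoin_of_row_eq_zero hγ (Subalgebra.sub_mem _ hx hx')
    (i := i) (sub_eq_zero.mpr hrow)

theorem exists_mem_adjoin_row_eq (hγ : Irreducible γ.charpoly) (i : n) (v : n → F) :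
    ∃ x ∈ Algebra.adjoin F {γ}, x i = v := by
  let rowOfPoly : degreeLT F (Fintype.card n) →ₗ[F] (n → F) :=
    LinearMap.proj i ∘ₗ (aeval γ).toLinearMap ∘ₗ (degreeLT F _).subtype
  have hinj : Function.Injective rowOfPoly := by
    rw [← LinearMap.ker_eq_bot, LinearMap.ker_eq_bot']
    rintro ⟨q, hq⟩ hrow
    have h0 : aeval γ q = 0 :=
      eq_zero_of_mem_adjoin_of_row_eq_zero hγ (aeval_mem_adjoin_singleton F γ) hrow
    refine Subtype.ext (eq_zero_of_dvd_of_degree_lt (minpoly.dvd F γ h0) ?_)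
    rw [minpoly_eq_charpoly_of_irreducible hγ, charpoly_degree_eq_dim]
    exact mem_degreeLT.mp hq
  have hrank : finrank F (degreeLT F (Fintype.card n)) = finrank F (n → F) := by
    simp [(degreeLTEquiv F _).finrank_eq]
  obtain ⟨⟨q, _⟩, hq⟩ :=
    (LinearMap.injective_iff_surjective_of_finrank_eq_finrank hrank).mp hinj v
  exact ⟨aeval γ q, aeval_mem_adjoin_singleton F γ, hq⟩

theorem existsUnique_mul_mem_adjoin_of_row_eq_single (hγ : Irreducible γ.charpoly) (i : n)
    {g : Matrix n n F} (hg : IsUnit g) :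
    ∃! px : Matrix n n F × Matrix n n F, IsUnit px.1 ∧ px.1 i = Pi.single i 1 ∧
      px.2 ∈ Algebra.adjoin F {γ} ∧ px.2 ≠ 0 ∧ g = px.1 * px.2 := by
  obtain ⟨x, hxK, hxrow⟩ := exists_mem_adjoin_row_eq hγ i (g i)
  have hx0 : x ≠ 0 := by
    rintro rfl
    obtain ⟨g', hgg'⟩ := hg.exists_right_inv
    exact row_ne_zero_of_mul_eq_one hgg' i hxrow.symm
  obtain ⟨y, -, hxy⟩ := exists_mul_eq_one_of_mem_adjoin_singleton
    ((minpoly_eq_charpoly_of_irreducible hγ).symm ▸ hγ) hxK hx0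
  have hyx : y * x = 1 := mul_eq_one_comm.mp hxy
  refine ⟨(g * y, x), ⟨hg.mul (.of_mul_eq_one_right x hxy), ?_, hxK, hx0, ?_⟩, ?_⟩
  · change (g * y) i = _
    rw [mul_apply_eq_vecMul, ← hxrow, ← mul_apply_eq_vecMul, hxy, row_one]
  · rw [mul_assoc, hyx, mul_one]
  · rintro ⟨p, x'⟩ ⟨-, hprow, hx'K, -, rfl⟩
    obtain rfl : x' = x := eq_of_mem_adjoin_of_row_eq hγ hx'K hxK
      (hxrow.trans (row_mul_eq_of_row_eq_single hprow x')).symm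
    rw [mul_assoc, hxy, mul_one]

theorem eq_one_of_mem_adjoin_of_row_eq_single (hγ : Irreducible γ.charpoly) {p : Matrix n n F}
    (hp : p ∈ Algebra.adjoin F {γ}) {i : n} (hrow : p i = Pi.single i 1) : p = 1 :=
  eq_of_mem_adjoin_of_row_eq hγ hp (Subalgebra.one_mem _) (hrow.trans (row_one i).symm)

end Irreducible

end Matrix

/-- For regular elliptic `γ ∈ GL_n(F)` every `g ∈ GL_n(F)` factors uniquely as `g = p·x`
with `p` in the mirabolic subgroup `P₀` (invertible matrices whose last row is `(0,…,0,1)`)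
and `x` a nonzero element of the field `F[γ]`; moreover `P₀ ∩ F[γ]ˣ = {1}`. -/
theorem stmt2 {F : Type*} [Field F] (n : ℕ) (hn : 1 ≤ n)
    (γ : Matrix (Fin n) (Fin n) F)
    (hirr : Irreducible (Matrix.charpoly γ)) :
    (∀ g : Matrix (Fin n) (Fin n) F, IsUnit g →
      ∃! px : Matrix (Fin n) (Fin n) F × Matrix (Fin n) (Fin n) F,
        IsUnit px.1 ∧
        (∀ j : Fin n, px.1 ⟨n - 1, by omega⟩ j = if j = (⟨n - 1, by omega⟩ : Fin n) then 1 else 0) ∧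
        px.2 ∈ Algebra.adjoin F {γ} ∧ px.2 ≠ 0 ∧ g = px.1 * px.2) ∧
    (∀ p : Matrix (Fin n) (Fin n) F, IsUnit p →
      (∀ j : Fin n, p ⟨n - 1, by omega⟩ j = if j = (⟨n - 1, by omega⟩ : Fin n) then 1 else 0) →
      p ∈ Algebra.adjoin F {γ} → p = 1) := by
  have hrow (p : Matrix (Fin n) (Fin n) F) (i : Fin n) :
      (∀ j, p i j = if j = i then 1 else 0) ↔ p i = Pi.single i 1 := by
    simp only [funext_iff, Pi.single_apply]
  simp only [hrow]
  exact ⟨fun g hg => Matrix.existsUnique_mul_mem_adjoin_of_row_eq_single hirr _ hg,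
    fun p _ hp hpK => Matrix.eq_one_of_mem_adjoin_of_row_eq_single hirr hpK hp⟩
end

section
/- Let b(u) = (1/2)·{u} − (1/2)·{u}², where {u} = u − ⌊u⌋ is the fractional part. Then for every complex number s = β + iγ with β ≥ 0 and γ ≥ 1, the integral ∫₀^∞ b(u)/(u+s)² du converges absolutely and satisfies |∫₀^∞ b(u)/(u+s)² du| ≤ 1/(3γ). -/
/-!
Since `{u} ∈ [0, 1)`, the numerator `b(u) = {u}(1 - {u})/2` lies in `[0, 1/8]`, and for
`u ≥ 0`, `Re s ≥ 0` we have `|u + s|² = (u + β)² + γ² ≥ u² + γ²`. Hence the integrand is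
dominated by `(1/8)(u² + γ²)⁻¹`, whose integral over `(0, ∞)` is `π/(16γ) ≤ 1/(3γ)`.
-/

open MeasureTheory Set Real

lemma abs_half_mul_sub_half_mul_sq_le {x : ℝ} (h0 : 0 ≤ x) (h1 : x ≤ 1) :
    |(1 / 2) * x - (1 / 2) * x ^ 2| ≤ 1 / 8 := by
  rw [abs_le]
  constructor <;> nlinarith [sq_nonneg (x - 1 / 2)]

lemma sq_add_im_sq_le_norm_add_sq {s : ℂ} (hs : 0 ≤ s.re) {u : ℝ} (hu : 0 ≤ u) :
    u ^ 2 + s.im ^ 2 ≤ ‖((u : ℂ) + s) ^ 2‖ := by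
  rw [norm_pow, ← Complex.normSq_eq_norm_sq, Complex.normSq_apply]
  simp only [Complex.add_re, Complex.add_im, Complex.ofReal_re, Complex.ofReal_im, zero_add]
  nlinarith [mul_nonneg hu hs]

section InvSqAddSq

variable {γ : ℝ} (hγ : 0 < γ)
include hγ

private lemma inv_sq_add_sq_eq (u : ℝ) :
    (u ^ 2 + γ ^ 2)⁻¹ = γ⁻¹ * (γ⁻¹ * (1 + (γ⁻¹ * u) ^ 2)⁻¹) := by
  field_simp
  ring

lemma integrableOn_Ioi_inv_sq_add_sq :
    IntegrableOn (fun u : ℝ => (u ^ 2 + γ ^ 2)⁻¹) (Ioi 0) := by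
  have hscaled : IntegrableOn (fun u : ℝ => (1 + (γ⁻¹ * u) ^ 2)⁻¹) (Ioi 0) := by
    simpa using (integrableOn_Ioi_comp_mul_left_iff (fun x : ℝ => (1 + x ^ 2)⁻¹) 0
      (inv_pos.mpr hγ)).mpr integrable_inv_one_add_sq.integrableOn
  rw [funext (inv_sq_add_sq_eq hγ)]
  exact (hscaled.const_mul γ⁻¹).const_mul γ⁻¹

lemma integral_Ioi_inv_sq_add_sq :
    ∫ u in Ioi (0 : ℝ), (u ^ 2 + γ ^ 2)⁻¹ = π / (2 * γ) := by
  have hscaled := integral_comp_mul_left_Ioi (fun x : ℝ => (1 + x ^ 2)⁻¹) 0 (inv_pos.mpr hγ)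
  simp only [mul_zero, integral_Ioi_inv_one_add_sq, arctan_zero, sub_zero, smul_eq_mul,
    inv_inv] at hscaled
  simp only [inv_sq_add_sq_eq hγ, integral_const_mul, hscaled]
  field_simp

end InvSqAddSq

section BoundedNumerator

variable {b : ℝ → ℝ} {M : ℝ} (hM : ∀ u, |b u| ≤ M) {s : ℂ} (hre : 0 ≤ s.re) (him : 0 < s.im)
include hM hre him

lemma norm_ofReal_div_add_sq_le {u : ℝ} (hu : 0 ≤ u) :
    ‖(b u : ℂ) / ((u : ℂ) + s) ^ 2‖ ≤ M * (u ^ 2 + s.im ^ 2)⁻¹ := by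
  have hpos : 0 < u ^ 2 + s.im ^ 2 := by positivity
  rw [norm_div, Complex.norm_real, Real.norm_eq_abs, ← div_eq_mul_inv]
  exact div_le_div₀ ((abs_nonneg _).trans (hM u)) (hM u) hpos
    (sq_add_im_sq_le_norm_add_sq hre hu)

lemma integrableOn_Ioi_ofReal_div_add_sq (hb : Measurable b) :
    IntegrableOn (fun u : ℝ => (b u : ℂ) / ((u : ℂ) + s) ^ 2) (Ioi 0) := by
  refine Integrable.mono' ((integrableOn_Ioi_inv_sq_add_sq him).const_mul M) ?_ ?_
  · exact ((Complex.measurable_ofReal.comp hb).div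
      ((Complex.measurable_ofReal.add_const s).pow_const 2)).aestronglyMeasurable
  · filter_upwards [ae_restrict_mem measurableSet_Ioi] with u hu
    exact norm_ofReal_div_add_sq_le hM hre him (le_of_lt hu)

lemma norm_integral_Ioi_ofReal_div_add_sq_le :
    ‖∫ u in Ioi (0 : ℝ), (b u : ℂ) / ((u : ℂ) + s) ^ 2‖ ≤ M * (π / (2 * s.im)) := by
  calc ‖∫ u in Ioi (0 : ℝ), (b u : ℂ) / ((u : ℂ) + s) ^ 2‖
      ≤ ∫ u in Ioi (0 : ℝ), M * (u ^ 2 + s.im ^ 2)⁻¹ :=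
        norm_integral_le_of_norm_le ((integrableOn_Ioi_inv_sq_add_sq him).const_mul M)
          (by filter_upwards [ae_restrict_mem measurableSet_Ioi] with u hu
              exact norm_ofReal_div_add_sq_le hM hre him (le_of_lt hu))
    _ = M * (π / (2 * s.im)) := by
        rw [integral_const_mul, integral_Ioi_inv_sq_add_sq him]

end BoundedNumerator

/-- With `b(u) = (1/2){u} − (1/2){u}²` (`{u}` the fractional part), for `s = β + iγ` with
`β ≥ 0` and `γ ≥ 1` the integral `∫₀^∞ b(u)/(u+s)² du` converges absolutely and is bounded
in absolute value by `1/(3γ)`. -/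
theorem stmt12 (s : ℂ) (hre : 0 ≤ s.re) (him : 1 ≤ s.im) :
    MeasureTheory.IntegrableOn
      (fun u : ℝ =>
        (((1 / 2) * Int.fract u - (1 / 2) * Int.fract u ^ 2 : ℝ) : ℂ) / ((u : ℂ) + s) ^ 2)
      (Set.Ioi 0) ∧
    ‖(∫ u in Set.Ioi (0 : ℝ),
        (((1 / 2) * Int.fract u - (1 / 2) * Int.fract u ^ 2 : ℝ) : ℂ) / ((u : ℂ) + s) ^ 2)‖ ≤
      1 / (3 * s.im) := by
  have hγ : 0 < s.im := one_pos.trans_le him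
  have hb : ∀ u : ℝ, |(1 / 2) * Int.fract u - (1 / 2) * Int.fract u ^ 2| ≤ 1 / 8 := fun u =>
    abs_half_mul_sub_half_mul_sq_le (Int.fract_nonneg u) (Int.fract_lt_one u).le
  have hmeas : Measurable fun u : ℝ => (1 / 2) * Int.fract u - (1 / 2) * Int.fract u ^ 2 := by
    fun_prop
  refine ⟨integrableOn_Ioi_ofReal_div_add_sq hb hre hγ hmeas,
    (norm_integral_Ioi_ofReal_div_add_sq_le hb hre hγ).trans ?_⟩
  calc 1 / 8 * (π / (2 * s.im)) = (π / 16) / s.im := by ring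
    _ ≤ (1 / 3) / s.im := div_le_div_of_nonneg_right (by linarith [pi_lt_d2]) hγ.le
    _ = 1 / (3 * s.im) := by ring
end

section
/- Let d ≥ 1 and let (f_m)_{m∈ℕ} be a sequence of real-analytic functions on ℝ^d such that for every point x ∈ ℝ^d there exists M(x) ∈ ℕ with f_m(x) = 0 for all m ≥ M(x). Then there exists M₀ ∈ ℕ such that f_m is identically zero on ℝ^d for every m ≥ M₀. -/
/-! The sets `Λ l = {x | ∀ m ≥ l, f m x = 0}` are closed and cover the space, so by Baire one of
them contains an open set. On it every `f m` with `m ≥ l` vanishes, and by the identity theorem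
on the connected space it then vanishes everywhere. -/

open Set Filter Topology

section Baire

variable {X E : Type*} [TopologicalSpace X] [TopologicalSpace E] [Zero E] [T1Space E]

theorem isClosed_setOf_forall_ge_eq_zero {f : ℕ → X → E} (hf : ∀ m, Continuous (f m)) (l : ℕ) :
    IsClosed {x | ∀ m ≥ l, f m x = 0} := by
  simp only [ofPred_forall]
  exact isClosed_iInter fun m => isClosed_iInter fun _ => isClosed_singleton.preimage (hf m)

theorem BaireSpace.exists_eventually_forall_ge_eq_zero [BaireSpace X] [Nonempty X] {f : ℕ → X → E}
    (hf : ∀ m, Continuous (f m)) (hz : ∀ x, ∃ M, ∀ m ≥ M, f m x = 0) :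
    ∃ l x₀, ∀ᶠ x in 𝓝 x₀, ∀ m ≥ l, f m x = 0 := by
  have hcover : ⋃ l, {x | ∀ m ≥ l, f m x = 0} = univ :=
    eq_univ_of_forall fun x => mem_iUnion.2 (hz x)
  obtain ⟨l, x₀, hx₀⟩ :=
    nonempty_interior_of_iUnion_of_closed (isClosed_setOf_forall_ge_eq_zero hf) hcover
  exact ⟨l, x₀, mem_interior_iff_mem_nhds.1 hx₀⟩

end Baire

theorem exists_forall_ge_eq_zero_of_analyticOnNhd {𝕜 E F : Type*} [NontriviallyNormedField 𝕜]
    [NormedAddCommGroup E] [NormedSpace 𝕜 E] [BaireSpace E] [PreconnectedSpace E]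
    [NormedAddCommGroup F] [NormedSpace 𝕜 F] {f : ℕ → E → F}
    (hf : ∀ m, AnalyticOnNhd 𝕜 (f m) univ) (hz : ∀ x, ∃ M, ∀ m ≥ M, f m x = 0) :
    ∃ M₀, ∀ m ≥ M₀, f m = 0 := by
  have hcont m : Continuous (f m) := continuousOn_univ.1 (hf m).continuousOn
  obtain ⟨l, x₀, hx₀⟩ := BaireSpace.exists_eventually_forall_ge_eq_zero hcont hz
  refine ⟨l, fun m hm => (hf m).eq_of_eventuallyEq (z₀ := x₀) analyticOnNhd_const ?_⟩
  filter_upwards [hx₀] with x hx using hx m hm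

theorem stmt13_general (d : ℕ) (f : ℕ → (Fin d → ℝ) → ℂ)
    (hf : ∀ m : ℕ, ∀ x : Fin d → ℝ, AnalyticAt ℝ (f m) x)
    (hz : ∀ x : Fin d → ℝ, ∃ M : ℕ, ∀ m ≥ M, f m x = 0) :
    ∃ M₀ : ℕ, ∀ m ≥ M₀, ∀ x : Fin d → ℝ, f m x = 0 := by
  obtain ⟨M₀, hM₀⟩ := exists_forall_ge_eq_zero_of_analyticOnNhd (fun m x _ => hf m x) hz
  exact ⟨M₀, fun m hm => congrFun (hM₀ m hm)⟩

/-- If each `f_m : ℝ^d → ℂ` is real-analytic and for every point `x` the values `f_m(x)`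
vanish for all sufficiently large `m`, then there is `M₀` such that `f_m ≡ 0` for all
`m ≥ M₀`. -/
theorem stmt13 (d : ℕ) (hd : 1 ≤ d) (f : ℕ → (Fin d → ℝ) → ℂ)
    (hf : ∀ m : ℕ, ∀ x : Fin d → ℝ, AnalyticAt ℝ (f m) x)
    (hz : ∀ x : Fin d → ℝ, ∃ M : ℕ, ∀ m ≥ M, f m x = 0) :
    ∃ M₀ : ℕ, ∀ m ≥ M₀, ∀ x : Fin d → ℝ, f m x = 0 :=
  stmt13_general d f hf hz
end

section
/- Let F be a field, d ≥ 2, and let C ∈ M_d(F) be the companion matrix of the monic polynomial ℘(λ) = λ^d − c_{d−1}λ^{d−1} − ⋯ − c_1λ − c_0 (so C has subdiagonal entries 1, last column (c_0,…,c_{d−1})ᵀ, and zeros elsewhere). Let N ∈ M_d(F) be the matrix with a single nonzero entry 1 in position (1,d). For 1 ≤ i ≤ d−1, write (b^{(i)}_1, …, b^{(i)}_d) for the last row of C^i, and let X_{(i)} ∈ M_d(F) be the strictly upper triangular Toeplitz matrix with (k,l)-entry b^{(i)}_{l−k} for l > k (and 0 for l ≤ k). Then X = X_{(i)} satisfies the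 Sylvester equation C·X − X·C = C^i·N − N·C^i. -/
/-!
The telescoping sum `Y = ∑_{j<i} C^j N C^(i-1-j)` solves `C Y - Y C = C^i N - N C^i` in any ring.
Indexing from `0`: since `C e_j = e_{j+1}` for `j < d - 1`, column `0` of `C^j` is `e_j` for `j < d`,
so `Y_{k,l} = (C^(i-1-k))_{d-1,l}` for `k < i` and `0` otherwise; moreover
`(C^q)_{d-1,l} = (C^(q+l))_{d-1,0}`, which vanishes when `q + l < d - 1`. Comparing exponents,
`Y` is exactly the Toeplitz matrix `X`.
-/

open Finset

theorem lie_sum_pow_mul_mul_pow {A : Type*} [Ring A] (a b : A) (n : ℕ) :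
    ⁅a, ∑ j ∈ range n, a ^ j * b * a ^ (n - 1 - j)⁆ = ⁅a ^ n, b⁆ := by
  have h := congr($((LinearMap.commute_mulLeft_right (R := ℤ) a a).mul_geom_sum₂ n) b)
  simpa [Ring.lie_def, LinearMap.sum_apply, Finset.mul_sum, Finset.sum_mul, mul_assoc] using h

namespace Matrix

theorem mul_single_mul_apply {R l m n o : Type*} [Semiring R] [Fintype m] [Fintype n]
    [DecidableEq m] [DecidableEq n] (M : Matrix l m R) (a : m) (b : n) (c : R)
    (B : Matrix n o R) (k : l) (j : o) : (M * single a b c * B) k j = M k a * c * B b j := by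
  rw [mul_apply, Fintype.sum_eq_single b, mul_single_apply_same]
  intro x hx
  rw [mul_single_apply_of_ne _ _ _ _ _ hx, zero_mul]

variable {R : Type*} [Semiring R] {n : ℕ} {C : Matrix (Fin (n + 1)) (Fin (n + 1)) R}
  (hC : ∀ k l : Fin (n + 1), (l : ℕ) < n → C k l = if (k : ℕ) = l + 1 then 1 else 0)
include hC

theorem pow_apply_zero_of_shift {p : ℕ} (hp : p ≤ n) (k : Fin (n + 1)) :
    (C ^ p) k 0 = if (k : ℕ) = p then 1 else 0 := by
  induction p generalizing k with
  | zero => rw [pow_zero, one_apply]; simp only [Fin.val_eq_zero_iff]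
  | succ p ih =>
    rw [pow_succ', mul_apply, Fintype.sum_eq_single ⟨p, by omega⟩]
    · rw [ih (by omega), if_pos rfl, mul_one, hC _ _ (by simp; omega)]
    · intro j hj
      rw [ih (by omega), if_neg (by simpa [Fin.ext_iff] using hj), mul_zero]

theorem pow_apply_eq_pow_add_apply_zero_of_shift (q : ℕ) (k l : Fin (n + 1)) :
    (C ^ q) k l = (C ^ (q + l)) k 0 := by
  rw [pow_add, mul_apply, Fintype.sum_eq_single l]
  · rw [pow_apply_zero_of_shift hC l.is_le, if_pos rfl, mul_one]
  · intro j hj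
    rw [pow_apply_zero_of_shift hC l.is_le, if_neg (by simpa [Fin.ext_iff] using hj), mul_zero]

theorem pow_last_apply_zero_of_shift {p : ℕ} (hp : p < n) : (C ^ p) (Fin.last n) 0 = 0 := by
  rw [pow_apply_zero_of_shift hC hp.le, if_neg (by simp; omega)]

theorem sum_pow_mul_single_mul_pow_apply_of_shift {i : ℕ} (hi : i ≤ n + 1) (k l : Fin (n + 1)) :
    (∑ j ∈ range i, C ^ j * single 0 (Fin.last n) 1 * C ^ (i - 1 - j) :
        Matrix (Fin (n + 1)) (Fin (n + 1)) R) k l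
      = if (k : ℕ) < i then (C ^ (i - 1 - k)) (Fin.last n) l else 0 := by
  simp only [sum_apply, mul_single_mul_apply, mul_one]
  split_ifs with hk
  · rw [Finset.sum_eq_single_of_mem (k : ℕ) (mem_range.2 hk)]
    · rw [pow_apply_zero_of_shift hC (by omega), if_pos rfl, one_mul]
    · intro j hj hjk
      rw [pow_apply_zero_of_shift hC (by have := mem_range.1 hj; omega), if_neg (Ne.symm hjk),
        zero_mul]
  · refine Finset.sum_eq_zero fun j hj => ?_
    rw [pow_apply_zero_of_shift hC (by have := mem_range.1 hj; omega),
      if_neg (by have := mem_range.1 hj; omega), zero_mul]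

end Matrix

/-- Let `C ∈ M_d(F)` (`d = m + 2 ≥ 2`) be the companion-type matrix with subdiagonal
entries `1`, last column `(c_0,…,c_{d−1})ᵀ` and zeros elsewhere, let `N` have a single
entry `1` in position `(1,d)`, let `(b^{(i)}_1,…,b^{(i)}_d)` be the last row of `C^i`, and
let `X_{(i)}` be the strictly upper triangular Toeplitz matrix with `(k,l)`-entry
`b^{(i)}_{l−k}` for `l > k`. Then for `1 ≤ i ≤ d−1`, `X = X_{(i)}` satisfies the Sylvester
equation `C·X − X·C = C^i·N − N·C^i`. -/
theorem stmt18 {F : Type*} [Field F] (m i : ℕ) (hid : i ≤ m + 1)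
    (c : Fin (m + 2) → F)
    (C N X : Matrix (Fin (m + 2)) (Fin (m + 2)) F)
    (hC : ∀ k l : Fin (m + 2),
      C k l = if (k : ℕ) = (l : ℕ) + 1 then 1 else if (l : ℕ) = m + 1 then c k else 0)
    (hN : N = Matrix.single 0 (Fin.last (m + 1)) 1)
    (hX : ∀ k l : Fin (m + 2),
      X k l = if hkl : (k : ℕ) < (l : ℕ) then
          (C ^ i) (Fin.last (m + 1)) ⟨(l : ℕ) - (k : ℕ) - 1, by have := l.isLt; omega⟩
        else 0) :
    C * X - X * C = C ^ i * N - N * C ^ i := by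
  have hshift : ∀ k l : Fin (m + 2), (l : ℕ) < m + 1 → C k l = if (k : ℕ) = l + 1 then 1 else 0 :=
    fun k l hl => by rw [hC, if_neg hl.ne]
  have hXsum : X = ∑ j ∈ range i, C ^ j * N * C ^ (i - 1 - j) := by
    ext k l
    rw [hX, hN, Matrix.sum_pow_mul_single_mul_pow_apply_of_shift hshift (by omega),
      Matrix.pow_apply_eq_pow_add_apply_zero_of_shift hshift _ _ l]
    split_ifs with hkl hki hki
    · rw [Matrix.pow_apply_eq_pow_add_apply_zero_of_shift hshift, Fin.val_mk,
        show i - 1 - k + l = i + (l - k - 1) by omega]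
    · rw [Matrix.pow_apply_eq_pow_add_apply_zero_of_shift hshift, Fin.val_mk,
        Matrix.pow_last_apply_zero_of_shift hshift (by omega)]
    · exact (Matrix.pow_last_apply_zero_of_shift hshift (by omega)).symm
    · rfl
  rw [hXsum, ← Ring.lie_def, lie_sum_pow_mul_mul_pow, Ring.lie_def]
end
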